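/- Let β be a mixed base, m ≥ 1, X ∈ ℕ^m, n = σ_β(X) the base-β Nim sum of X, and h < n. Let N = max{L : n_L ≠ h_L} (digits in base β). Then there exists C ∈ ℕ^m with X - C ∈ ℕ^m componentwise, σ_β(X - C) = h, and moreover c^i < β̂_{N+1} for all i (i.e., C only affects digits up to N). -/

import Mathlib

open scoped BigOperators

/-- β̂_L = β_0 ⋯ β_{L-1}, the place value of digit L in mixed base β. -/
def bhat (β : ℕ → ℕ) (L : ℕ) : ℕ := ∏ i ∈ Finset.range L, β i

/-- The L-th digit of n in the mixed base β. -/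
def mdigit (β : ℕ → ℕ) (n L : ℕ) : ℕ := n / bhat β L % β L

/-- Digit-wise addition modulo β_L in mixed base β. -/
def moplus (β : ℕ → ℕ) (n h : ℕ) : ℕ :=
  ∑ L ∈ Finset.range (n + h + 1), ((mdigit β n L + mdigit β h L) % β L) * bhat β L

/-- Digit-wise subtraction modulo β_L in mixed base β. -/
def mominus (β : ℕ → ℕ) (n h : ℕ) : ℕ :=
  ∑ L ∈ Finset.range (n + h + 1), ((β L + mdigit β n L - mdigit β h L) % β L) * bhat β L

/-- σ_β(X) = x^0 ⊕ ⋯ ⊕ x^{m-1}: the digit-wise Nim sum in mixed base β. -/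
def msigma (β : ℕ → ℕ) {m : ℕ} (X : Fin m → ℕ) : ℕ :=
  ∑ L ∈ Finset.range (∑ i, X i + 1), ((∑ i, mdigit β (X i) L) % β L) * bhat β L

/-- Hamming weight: number of nonzero components. -/
def hamwt {m : ℕ} (C : Fin m → ℕ) : ℕ := (Finset.univ.filter (fun i => C i ≠ 0)).card

/-- ord_β(n): the largest L with β̂_L ∣ n (⊤ for n = 0). -/
def mord (β : ℕ → ℕ) (n : ℕ) : ℕ∞ :=
  if n = 0 then ⊤ else (Nat.findGreatest (fun L => bhat β L ∣ n) n : ℕ∞)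

/-- 𝒞 is a Sprague-Grundy system of σ_β: its members are nonzero moves and
σ_β satisfies the mex recursion of the take-away game Γ(ℕ^m, 𝒞), i.e. σ_β is the
Sprague-Grundy function of that game. -/
def IsSGSystem (β : ℕ → ℕ) {m : ℕ} (𝒞 : Set (Fin m → ℕ)) : Prop :=
  (∀ C ∈ 𝒞, C ≠ 0) ∧
  ∀ X : Fin m → ℕ, msigma β X =
    sInf {n : ℕ | ∀ C ∈ 𝒞, (∀ i, C i ≤ X i) → msigma β (fun i => X i - C i) ≠ n}

/-! Put t = n_N - h_N > 0. The N-th column of digits of X sums to something ≡ n_N, hence at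
least t, so the N-th digits can be lowered by amounts summing to t without borrowing; this
fixes digit N of the Nim sum. Some component j is lowered strictly at digit N, which makes
it smaller whatever its lower digits are, so those digits can be chosen freely to correct
every digit L < N of the Nim sum to h_L. Only digits up to N change, so C < β̂_{N+1}. -/

open Finset Filter

section MixedRadix

variable {β : ℕ → ℕ}

lemma bhat_succ (β : ℕ → ℕ) (L : ℕ) : bhat β (L + 1) = bhat β L * β L :=
  prod_range_succ _ _

lemma bhat_zero (β : ℕ → ℕ) : bhat β 0 = 1 := prod_range_zero _

lemma bhat_pos (hβ : ∀ L, 0 < β L) (L : ℕ) : 0 < bhat β L :=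
  prod_pos fun i _ => hβ i

lemma bhat_dvd_bhat (β : ℕ → ℕ) {L K : ℕ} (h : L ≤ K) : bhat β L ∣ bhat β K :=
  prod_dvd_prod_of_subset _ _ _ (range_subset_range.2 h)

lemma bhat_mono (hβ : ∀ L, 0 < β L) : Monotone (bhat β) := fun _ _ h =>
  Nat.le_of_dvd (bhat_pos hβ _) (bhat_dvd_bhat β h)

lemma self_lt_bhat (hβ : ∀ L, 2 ≤ β L) (L : ℕ) : L < bhat β L :=
  calc L < 2 ^ L := Nat.lt_two_pow_self
    _ = ∏ _i ∈ range L, 2 := by simp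
    _ ≤ bhat β L := prod_le_prod' fun i _ => hβ i

lemma mdigit_lt (hβ : ∀ L, 0 < β L) (x L : ℕ) : mdigit β x L < β L :=
  Nat.mod_lt _ (hβ L)

lemma mdigit_eq_zero_of_lt {x L : ℕ} (h : x < bhat β L) : mdigit β x L = 0 := by
  rw [mdigit, Nat.div_eq_of_lt h, Nat.zero_mod]

lemma eventually_mdigit_eq_zero (hβ : ∀ L, 2 ≤ β L) (x : ℕ) :
    ∀ᶠ L in atTop, mdigit β x L = 0 :=
  eventually_atTop.2 ⟨x, fun L hL => mdigit_eq_zero_of_lt (hL.trans_lt (self_lt_bhat hβ L))⟩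

lemma mod_bhat_succ (x L : ℕ) :
    x % bhat β (L + 1) = x % bhat β L + bhat β L * mdigit β x L := by
  rw [bhat_succ, Nat.mod_mul, mdigit]

lemma mdigit_add_bhat_mul (hβ : ∀ L, 0 < β L) {L K : ℕ} (hLK : L < K) (x q : ℕ) :
    mdigit β (x + bhat β K * q) L = mdigit β x L := by
  obtain ⟨r, hr⟩ := bhat_dvd_bhat β hLK
  rw [hr, bhat_succ, mdigit, mdigit, mul_assoc, mul_assoc,
    Nat.add_mul_div_left _ _ (bhat_pos hβ L), Nat.add_mul_mod_self_left]

def ofMDigits (β c : ℕ → ℕ) (K : ℕ) : ℕ := ∑ L ∈ range K, c L * bhat β L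

lemma ofMDigits_succ (c : ℕ → ℕ) (K : ℕ) :
    ofMDigits β c (K + 1) = ofMDigits β c K + bhat β K * c K := by
  rw [ofMDigits, sum_range_succ, mul_comm, ofMDigits]

lemma ofMDigits_lt_bhat {c : ℕ → ℕ} (hc : ∀ L, c L < β L) (K : ℕ) :
    ofMDigits β c K < bhat β K := by
  induction K with
  | zero => simp [ofMDigits, bhat_zero]
  | succ K ih =>
    calc ofMDigits β c (K + 1) < bhat β K + bhat β K * c K := by
          rw [ofMDigits_succ]; omega
      _ = bhat β K * (c K + 1) := by ring
      _ ≤ bhat β (K + 1) := by rw [bhat_succ]; exact Nat.mul_le_mul_left _ (hc K)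

lemma ofMDigits_mdigit (x K : ℕ) : ofMDigits β (mdigit β x) K = x % bhat β K := by
  induction K with
  | zero => simp [ofMDigits, bhat_zero, Nat.mod_one]
  | succ K ih => rw [ofMDigits_succ, ih, mod_bhat_succ]

lemma mdigit_ofMDigits_of_lt (hβ : ∀ L, 0 < β L) {c : ℕ → ℕ} (hc : ∀ L, c L < β L)
    {L K : ℕ} (hLK : L < K) : mdigit β (ofMDigits β c K) L = c L := by
  induction K with
  | zero => omega
  | succ K ih =>
    rw [ofMDigits_succ]
    rcases Nat.lt_succ_iff_lt_or_eq.1 hLK with hL | rfl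
    · rw [mdigit_add_bhat_mul hβ hL, ih hL]
    · rw [mdigit, Nat.add_mul_div_left _ _ (bhat_pos hβ L),
        Nat.div_eq_of_lt (ofMDigits_lt_bhat hc L), zero_add, Nat.mod_eq_of_lt (hc L)]

lemma mdigit_ofMDigits (hβ : ∀ L, 0 < β L) {c : ℕ → ℕ} (hc : ∀ L, c L < β L) {K : ℕ}
    (hK : ∀ L, K ≤ L → c L = 0) (L : ℕ) : mdigit β (ofMDigits β c K) L = c L := by
  rcases lt_or_ge L K with hL | hL
  · exact mdigit_ofMDigits_of_lt hβ hc hL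
  · rw [hK L hL, mdigit_eq_zero_of_lt ((ofMDigits_lt_bhat hc K).trans_le (bhat_mono hβ hL))]

lemma exists_mdigit_eq (hβ : ∀ L, 0 < β L) {c : ℕ → ℕ} (hc : ∀ L, c L < β L)
    (hc0 : ∀ᶠ L in atTop, c L = 0) : ∃ x, ∀ L, mdigit β x L = c L :=
  let ⟨K, hK⟩ := eventually_atTop.1 hc0
  ⟨ofMDigits β c K, mdigit_ofMDigits hβ hc hK⟩

lemma mdigit_msigma (hβ : ∀ L, 2 ≤ β L) {m : ℕ} (X : Fin m → ℕ) (L : ℕ) :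
    mdigit β (msigma β X) L = (∑ i, mdigit β (X i) L) % β L := by
  have hβ₀ : ∀ L, 0 < β L := fun L => zero_lt_two.trans_le (hβ L)
  refine mdigit_ofMDigits hβ₀ (fun L => Nat.mod_lt _ (hβ₀ L)) (fun L hL => ?_) L
  have hX : ∀ i, mdigit β (X i) L = 0 := fun i => mdigit_eq_zero_of_lt <|
    calc X i ≤ ∑ k, X k := single_le_sum (fun k _ => Nat.zero_le (X k)) (mem_univ i)
      _ < L := hL
      _ < bhat β L := self_lt_bhat hβ L
  simp [hX]

lemma sub_mod_bhat_eq_of_mdigit_eq (hβ : ∀ L, 2 ≤ β L) {x y M : ℕ}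
    (h : ∀ L, M ≤ L → mdigit β x L = mdigit β y L) :
    x - x % bhat β M = y - y % bhat β M := by
  set K := x + y + M
  have hsplit : ∀ z, z < bhat β K →
      z % bhat β M + ∑ L ∈ Ico M K, mdigit β z L * bhat β L = z := fun z hz => by
    rw [← ofMDigits_mdigit, ofMDigits, sum_range_add_sum_Ico _ (by omega : M ≤ K),
      ← ofMDigits, ofMDigits_mdigit, Nat.mod_eq_of_lt hz]
  have hK := self_lt_bhat hβ K
  have hx := hsplit x (by omega)
  have hy := hsplit y (by omega)
  rw [sum_congr rfl fun L hL => by rw [h L (mem_Ico.1 hL).1]] at hx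
  omega

lemma eq_of_mdigit_eq (hβ : ∀ L, 2 ≤ β L) {x y : ℕ} (h : ∀ L, mdigit β x L = mdigit β y L) :
    x = y := by
  simpa [bhat_zero, Nat.mod_one] using sub_mod_bhat_eq_of_mdigit_eq hβ (M := 0) fun L _ => h L

lemma lt_of_mdigit_lt (hβ : ∀ L, 2 ≤ β L) {x y N : ℕ} (hN : mdigit β x N < mdigit β y N)
    (hhigh : ∀ L, N < L → mdigit β x L = mdigit β y L) : x < y := by
  have hβ₀ : ∀ L, 0 < β L := fun L => zero_lt_two.trans_le (hβ L)
  have hmod : x % bhat β (N + 1) < y % bhat β (N + 1) := by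
    rw [mod_bhat_succ, mod_bhat_succ]
    calc x % bhat β N + bhat β N * mdigit β x N
        < bhat β N * (mdigit β x N + 1) := by
          have := Nat.mod_lt x (bhat_pos hβ₀ N); rw [mul_add_one]; omega
      _ ≤ bhat β N * mdigit β y N := Nat.mul_le_mul_left _ hN
      _ ≤ y % bhat β N + bhat β N * mdigit β y N := Nat.le_add_left _ _
  have := sub_mod_bhat_eq_of_mdigit_eq hβ fun L (hL : N + 1 ≤ L) => hhigh L hL
  have := Nat.mod_le x (bhat β (N + 1))
  have := Nat.mod_le y (bhat β (N + 1))
  omega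

lemma sub_lt_bhat_of_mdigit_eq (hβ : ∀ L, 2 ≤ β L) {x y M : ℕ}
    (h : ∀ L, M ≤ L → mdigit β x L = mdigit β y L) : y - x < bhat β M := by
  have := sub_mod_bhat_eq_of_mdigit_eq hβ h
  have := Nat.mod_lt y (bhat_pos (fun L => zero_lt_two.trans_le (hβ L)) M)
  have := Nat.mod_le x (bhat β M)
  omega

end MixedRadix

lemma exists_le_sum_eq {ι : Type*} [Fintype ι] [DecidableEq ι] (f : ι → ℕ) {t : ℕ}
    (ht : t ≤ ∑ i, f i) : ∃ g ≤ f, ∑ i, g i = t := by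
  induction t with
  | zero => exact ⟨0, fun _ => Nat.zero_le _, by simp⟩
  | succ t ih =>
    obtain ⟨g, hgf, hg⟩ := ih (by omega)
    obtain ⟨i, hi⟩ : ∃ i, g i < f i := by
      by_contra! H
      have := sum_le_sum fun i (_ : i ∈ univ) => H i
      omega
    refine ⟨g + Pi.single i 1, fun k => ?_, ?_⟩
    · rcases eq_or_ne k i with rfl | hk
      · simpa using hi
      · simpa [hk] using hgf k
    · simp only [Pi.add_apply, sum_add_distrib, hg, sum_pi_single', if_pos (mem_univ i)]

lemma exists_lt_add_mod_eq {b e : ℕ} (s : ℕ) (he : e < b) : ∃ w < b, (w + s) % b = e := by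
  refine ⟨(e + (b - 1) * s) % b, Nat.mod_lt _ (by omega), ?_⟩
  rw [Nat.mod_add_mod, add_assoc, ← Nat.succ_mul, Nat.succ_eq_add_one,
    Nat.sub_add_cancel (by omega : 1 ≤ b), Nat.add_mul_mod_self_left, Nat.mod_eq_of_lt he]

lemma sub_sub_mod_mod_eq {S b e : ℕ} (he : e < b) (heS : e ≤ S % b) :
    (S - (S % b - e)) % b = e := by
  have := Nat.div_add_mod S b
  rw [show S - (S % b - e) = e + b * (S / b) by omega, Nat.add_mul_mod_self_left,
    Nat.mod_eq_of_lt he]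

lemma exists_columns_sum_mod_eq {ι : Type*} [Fintype ι] [DecidableEq ι] {β : ℕ → ℕ}
    (d : ι → ℕ → ℕ) (hd : ∀ i L, d i L < β L) {e : ℕ → ℕ} (he : ∀ L, e L < β L) {N : ℕ}
    (heN : e N < (∑ i, d i N) % β N) (hhigh : ∀ L, N < L → (∑ i, d i L) % β L = e L) :
    ∃ c : ι → ℕ → ℕ, (∀ i L, c i L < β L) ∧ (∀ i L, N < L → c i L = d i L) ∧
      (∀ i, c i = d i ∨ c i N < d i N) ∧ ∀ L, (∑ i, c i L) % β L = e L := by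
  set S := ∑ i, d i N
  obtain ⟨g, hgd, hg⟩ := exists_le_sum_eq (fun i => d i N) (t := S % β N - e N)
    (by have := Nat.mod_le S (β N); omega)
  obtain ⟨j, hj⟩ : ∃ j, g j ≠ 0 := by
    by_contra! H
    simp [H] at hg
    omega
  choose w hwβ hw using fun L => exists_lt_add_mod_eq (∑ i ∈ univ.erase j, d i L) (he L)
  let c : ι → ℕ → ℕ := fun i L =>
    if L = N then d i N - g i else if i = j ∧ L < N then w L else d i L
  refine ⟨c, fun i L => ?_, fun i L hL => ?_, fun i => ?_, fun L => ?_⟩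
  · simp only [c]
    split_ifs with h₁ h₂
    · subst h₁; exact (Nat.sub_le _ _).trans_lt (hd i L)
    · exact hwβ L
    · exact hd i L
  · simp [c, hL.ne', hL.not_gt]
  · by_cases hi : g i = 0 ∧ i ≠ j
    · left
      funext L
      by_cases hL : L = N <;> simp [c, hL, hi.1, hi.2]
    · right
      have hgi : 0 < g i := by
        rcases not_and_or.1 hi with h | h
        · exact Nat.pos_of_ne_zero h
        · exact not_not.1 h ▸ Nat.pos_of_ne_zero hj
      have : g i ≤ d i N := hgd i
      simp only [c, if_pos rfl]
      omega
  · rcases lt_trichotomy L N with hL | rfl | hL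
    · -- column `j` has been lowered at `N`, so its digits below `N` are free
      rw [← add_sum_erase _ _ (mem_univ j)]
      have hrest : ∀ i ∈ univ.erase j, c i L = d i L := fun i hi => by
        simp [c, hL.ne, ne_of_mem_erase hi]
      rw [sum_congr rfl hrest]
      simpa [c, hL.ne, hL] using hw L
    · have hsum : ∑ i, c i L = S - (S % β L - e L) := by
        rw [← hg, ← sum_tsub_distrib _ fun i _ => hgd i]
        simp [c]
      rw [hsum, sub_sub_mod_mod_eq (he L) heN.le]
    · simpa [c, hL.ne', hL.not_gt] using hhigh L hL

theorem stmt3_general (β : ℕ → ℕ) (hβ : ∀ L, 2 ≤ β L) {m : ℕ}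
    (X : Fin m → ℕ) (n h N : ℕ) (hn : n = msigma β X) (hh : h < n)
    (hN : mdigit β n N ≠ mdigit β h N)
    (hNmax : ∀ L, N < L → mdigit β n L = mdigit β h L) :
    ∃ C : Fin m → ℕ, (∀ i, C i ≤ X i) ∧
      msigma β (fun i => X i - C i) = h ∧ ∀ i, C i < bhat β (N + 1) := by
  have hβ₀ : ∀ L, 0 < β L := fun L => zero_lt_two.trans_le (hβ L)
  have hdig : ∀ L, mdigit β n L = (∑ i, mdigit β (X i) L) % β L := hn ▸ mdigit_msigma hβ X
  have hhN : mdigit β h N < mdigit β n N := (Ne.symm hN).lt_of_le <| not_lt.1 fun hlt =>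
    hh.not_gt (lt_of_mdigit_lt hβ hlt hNmax)
  obtain ⟨c, hcβ, hchigh, hcX, hcsum⟩ := exists_columns_sum_mod_eq (fun i => mdigit β (X i))
    (fun i => mdigit_lt hβ₀ (X i)) (mdigit_lt hβ₀ h) (hdig N ▸ hhN)
    fun L hL => hdig L ▸ hNmax L hL
  choose Y hY using fun i => exists_mdigit_eq hβ₀ (hcβ i) <|
    ((eventually_mdigit_eq_zero hβ (X i)).and (eventually_gt_atTop N)).mono
      fun L ⟨h0, hL⟩ => (hchigh i L hL).trans h0
  have hYX : ∀ i, Y i ≤ X i := fun i => by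
    rcases hcX i with heq | hlt
    · exact (eq_of_mdigit_eq hβ fun L => by rw [hY, heq]).le
    · exact (lt_of_mdigit_lt hβ (by rwa [hY]) fun L hL => by rw [hY, hchigh i L hL]).le
  refine ⟨fun i => X i - Y i, fun i => Nat.sub_le _ _, ?_, fun i => ?_⟩
  · simp only [Nat.sub_sub_self (hYX _)]
    exact eq_of_mdigit_eq hβ fun L => by simp only [mdigit_msigma hβ, hY, hcsum]
  · exact sub_lt_bhat_of_mdigit_eq hβ fun L (hL : N + 1 ≤ L) => by rw [hY, hchigh i L hL]

/-- Adequate covering: for h < σ_β(X) there is a move C with σ_β(X - C) = h,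
and C only affects digits up to N = max{L : n_L ≠ h_L}. -/
theorem stmt3 (β : ℕ → ℕ) (hβ : ∀ L, 2 ≤ β L) {m : ℕ} (hm : 1 ≤ m)
    (X : Fin m → ℕ) (n h N : ℕ) (hn : n = msigma β X) (hh : h < n)
    (hN : mdigit β n N ≠ mdigit β h N)
    (hNmax : ∀ L, N < L → mdigit β n L = mdigit β h L) :
    ∃ C : Fin m → ℕ, (∀ i, C i ≤ X i) ∧
      msigma β (fun i => X i - C i) = h ∧ ∀ i, C i < bhat β (N + 1) :=
  stmt3_general β hβ X n h N hn hh hN hNmax
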